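/- For every n ≥ 1 one has B_n = τ ∘ J^{n−1} ∘ σ as bounded operators from ℓ²(VX) to ℓ²(VX). -/
import Mathlib


/- Formalization of a statement from "Ihara Zeta functions of infinite weighted graphs"
   (A. Deitmar).  Context: `X` is a connected graph of bounded valency, `w` is a positive
   weight function on oriented edges (darts) with finite total weight. -/

open scoped BigOperators
open SimpleGraph

attribute [local instance 10] Classical.propDecidable
noncomputable local instance (priority := 10) {α : Type*} : DecidableEq α := Classical.decEq _

variable {V : Type*}

/-- The standard basis vector of `ℓ²(ι)` at `i`. -/
noncomputable def bv {ι : Type*} (i : ι) : lp (fun _ : ι => ℂ) 2 := lp.single 2 i 1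

/-- For adjacent vertices `x, y`, `dartW G w h = w(x,y)·w(y,x)`, the weight `W(x,y)` of the
underlying edge. -/
noncomputable def dartW (G : SimpleGraph V) (w : G.Dart → ℝ) {x y : V} (h : G.Adj x y) : ℝ :=
  w ⟨(x, y), h⟩ * w ⟨(y, x), h.symm⟩

/-- A path of length `m` in the graph `G`: a sequence of adjacent vertices
`x₀, x₁, …, x_m` (encoded as a function `ℕ → V` which is constant from index `m` on). -/
structure GPath (G : SimpleGraph V) (m : ℕ) where
  f : ℕ → V
  adj : ∀ i, i < m → G.Adj (f i) (f (i + 1))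
  stable : ∀ i, m ≤ i → f i = f m

/-- The weight `w(p)` of a path: the product of the weights of its oriented edges. -/
noncomputable def GPath.wgt {G : SimpleGraph V} {m : ℕ} (w : G.Dart → ℝ) (p : GPath G m) : ℝ :=
  ∏ i : Fin m, w ⟨(p.f i, p.f (i + 1)), p.adj i i.isLt⟩

/-- A path is reduced (has no backtracking) iff `x_{j-1} ≠ x_{j+1}` for all `j`. -/
def GPath.Reduced {G : SimpleGraph V} {m : ℕ} (p : GPath G m) : Prop :=
  ∀ i, i + 2 ≤ m → p.f i ≠ p.f (i + 2)

/-- The diagonal of an operator on `ℓ²(ι)` with respect to the standard orthonormal basis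
is absolutely summable. -/
def DiagAbsSummable {ι : Type*}
    (S : lp (fun _ : ι => ℂ) 2 →L[ℂ] lp (fun _ : ι => ℂ) 2) : Prop :=
  Summable fun i : ι => ‖S (bv i) i‖

/-- The trace of an operator on `ℓ²(ι)`: the sum of its diagonal matrix entries with
respect to the standard orthonormal basis. -/
noncomputable def diagTr {ι : Type*}
    (S : lp (fun _ : ι => ℂ) 2 →L[ℂ] lp (fun _ : ι => ℂ) 2) : ℂ :=
  ∑' i : ι, S (bv i) i

lemma bv_apply {ι : Type*} (i j : ι) : (bv i : lp (fun _ : ι => ℂ) 2) j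
    = if j = i then 1 else 0 := by
  rcases eq_or_ne j i with rfl | h
  · simp [bv, lp.single_apply_self]
  · simp [bv, lp.single_apply_ne 2 i _ h, h]

lemma clm_ext_bv {ι κ : Type*}
    (S T : lp (fun _ : ι => ℂ) 2 →L[ℂ] lp (fun _ : κ => ℂ) 2)
    (h : ∀ i, S (bv i) = T (bv i)) : S = T := by
  refine ContinuousLinearMap.ext fun f => ?_
  have hf : HasSum (fun i => lp.single 2 i (f i)) f :=
    lp.hasSum_single (by norm_num) f
  have h1 : ∀ i : ι, lp.single 2 i (f i) = f i • bv i := fun i => by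
    rw [bv, ← lp.single_smul]; simp
  have hS : HasSum (fun i => S (lp.single 2 i (f i))) (S f) := S.hasSum hf
  have hT : HasSum (fun i => T (lp.single 2 i (f i))) (T f) := T.hasSum hf
  refine hS.unique ?_
  have : (fun i => S (lp.single 2 i (f i))) = fun i => T (lp.single 2 i (f i)) := by
    funext i; rw [h1, map_smul, map_smul, h]
  rw [this]; exact hT

/-- For every `n ≥ 1` one has `B_n = τ ∘ J^{n−1} ∘ σ`. -/
theorem statement_12 (G : SimpleGraph V) (hconn : G.Connected)
    (M : ℝ) (hM : 0 < M)
    (hval : ∀ x : V, (G.neighborSet x).Finite ∧ ((G.neighborSet x).ncard : ℝ) ≤ M)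
    (w : G.Dart → ℝ) (hw : ∀ e, 0 < w e) (hsum : Summable w)
    (B : ℕ → (lp (fun _ : V => ℂ) 2 →L[ℂ] lp (fun _ : V => ℂ) 2))
    (hB0 : B 0 = 1)
    (hBev : ∀ (n : ℕ), 1 ≤ n → ∀ x y : V, B (2 * n) (bv x) y
      = if y = x then ((∑' x' : G.neighborSet x, dartW G w x'.2 ^ n : ℝ) : ℂ) else 0)
    (hBodd : ∀ (n : ℕ) (x y : V), B (2 * n + 1) (bv x) y
      = if h : G.Adj x y then ((dartW G w h ^ n * w ⟨(x, y), h⟩ : ℝ) : ℂ) else 0)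
    (σ : lp (fun _ : V => ℂ) 2 →L[ℂ] lp (fun _ : G.Dart => ℂ) 2)
    (hσ : ∀ (x : V) (e : G.Dart), σ (bv x) e = if e.toProd.1 = x then (w e : ℂ) else 0)
    (J : lp (fun _ : G.Dart => ℂ) 2 →L[ℂ] lp (fun _ : G.Dart => ℂ) 2)
    (hJ : ∀ e e' : G.Dart, J (bv e) e' = if e' = e.symm then (w e.symm : ℂ) else 0)
    (τ : lp (fun _ : G.Dart => ℂ) 2 →L[ℂ] lp (fun _ : V => ℂ) 2)
    (hτ : ∀ (e : G.Dart) (y : V), τ (bv e) y = if y = e.toProd.2 then 1 else 0) :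
    ∀ n : ℕ, 1 ≤ n → B n = τ.comp ((J ^ (n - 1)).comp σ) := by
  -- J on basis vectors
  have hJbv : ∀ e : G.Dart, J (bv e) = ((w e.symm : ℂ)) • bv e.symm := by
    intro e
    apply lp.ext
    funext e'
    rw [hJ]
    have : ((w e.symm : ℂ) • bv e.symm : lp (fun _ : G.Dart => ℂ) 2) e'
        = (w e.symm : ℂ) * (bv e.symm : lp (fun _ : G.Dart => ℂ) 2) e' := rfl
    rw [this, bv_apply]
    by_cases h : e' = e.symm <;> simp [h]
  -- even powers of J on basis vectors
  have hJpow2 : ∀ (k : ℕ) (e : G.Dart),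
      (J ^ (2 * k)) (bv e) = (((w e * w e.symm) ^ k : ℝ) : ℂ) • bv e := by
    intro k
    induction k with
    | zero => intro e; simp
    | succ k ih =>
      intro e
      have h2 : 2 * (k + 1) = (2 * k + 1) + 1 := by ring
      have he : J (J (bv e)) = ((w e.symm * w e : ℝ) : ℂ) • bv e := by
        rw [hJbv, map_smul, hJbv, SimpleGraph.Dart.symm_symm, smul_smul]
        norm_cast
      rw [h2, pow_succ, pow_succ, ContinuousLinearMap.mul_apply,
        ContinuousLinearMap.mul_apply, he, map_smul, ih, smul_smul]
      congr 1
      push_cast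
      ring
  -- odd powers of J on basis vectors
  have hJpow2' : ∀ (k : ℕ) (e : G.Dart),
      (J ^ (2 * k + 1)) (bv e)
        = (((w e * w e.symm) ^ k * w e.symm : ℝ) : ℂ) • bv e.symm := by
    intro k e
    rw [pow_succ, ContinuousLinearMap.mul_apply, hJbv, map_smul, hJpow2,
      SimpleGraph.Dart.symm_symm, smul_smul]
    congr 1
    push_cast
    ring
  -- τ on basis vectors
  have hτbv : ∀ e : G.Dart, τ (bv e) = bv e.toProd.2 := by
    intro e
    apply lp.ext
    funext y
    rw [hτ, bv_apply]
  -- σ on basis vectors, as a finite sum over neighbors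
  intro n hn
  obtain ⟨m, rfl⟩ : ∃ m, n = m + 1 := ⟨n - 1, (Nat.succ_pred_eq_of_pos hn).symm⟩
  simp only [Nat.add_sub_cancel]
  apply clm_ext_bv
  intro x
  haveI : Fintype ↥(G.neighborSet x) := (hval x).1.fintype
  set d : ↥(G.neighborSet x) → G.Dart := fun x' => ⟨(x, (x' : V)), x'.2⟩ with hd
  have hσbv : σ (bv x) = ∑ x' : ↥(G.neighborSet x), ((w (d x') : ℂ)) • bv (d x') := by
    apply lp.ext
    funext e
    rw [hσ, lp.coeFn_sum, Finset.sum_apply]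
    have hterm : ∀ x' : ↥(G.neighborSet x),
        (((w (d x') : ℂ)) • bv (d x') : lp (fun _ : G.Dart => ℂ) 2) e
          = if e = d x' then (w e : ℂ) else 0 := by
      intro x'
      have : (((w (d x') : ℂ)) • bv (d x') : lp (fun _ : G.Dart => ℂ) 2) e
          = (w (d x') : ℂ) * (bv (d x') : lp (fun _ : G.Dart => ℂ) 2) e := rfl
      rw [this, bv_apply]
      by_cases h : e = d x' <;> simp [h]
    simp only [hterm]
    by_cases h1 : e.toProd.1 = x
    · rw [if_pos h1]
      have hmem : e.toProd.2 ∈ G.neighborSet x := by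
        have := e.adj
        rwa [h1] at this
      rw [Finset.sum_eq_single (⟨e.toProd.2, hmem⟩ : ↥(G.neighborSet x))]
      · rw [if_pos]
        apply SimpleGraph.Dart.ext
        simp [hd, ← h1]
      · intro b _ hb
        rw [if_neg]
        intro he
        apply hb
        apply Subtype.ext
        have h5 : e.toProd.2 = (d b).toProd.2 := by rw [he]
        exact h5.symm
      · intro hb; exact absurd (Finset.mem_univ _) hb
    · rw [if_neg h1]
      refine (Finset.sum_eq_zero ?_).symm
      intro b _
      rw [if_neg]
      intro he
      apply h1
      rw [he]
  rcases Nat.even_or_odd m with ⟨k, hk⟩ | ⟨k, hk⟩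
  · -- m = 2k, n = 2k+1 odd
    have hk' : m = 2 * k := by omega
    subst hk'
    rw [ContinuousLinearMap.comp_apply, ContinuousLinearMap.comp_apply, hσbv,
      map_sum, map_sum]
    simp only [map_smul, hJpow2, map_smul, hτbv]
    apply lp.ext
    funext y
    rw [hBodd, lp.coeFn_sum, Finset.sum_apply]
    have hterm : ∀ x' : ↥(G.neighborSet x),
        (((w (d x') : ℂ)) • (((w (d x') * w (d x').symm) ^ k : ℝ) : ℂ)
            • bv ((d x').toProd.2) : lp (fun _ : V => ℂ) 2) y
          = if y = (x' : V) then
              ((w (d x') * (w (d x') * w (d x').symm) ^ k : ℝ) : ℂ) else 0 := by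
      intro x'
      have hcoord : (((w (d x') : ℂ)) • (((w (d x') * w (d x').symm) ^ k : ℝ) : ℂ)
            • bv ((d x').toProd.2) : lp (fun _ : V => ℂ) 2) y
          = (w (d x') : ℂ) * ((((w (d x') * w (d x').symm) ^ k : ℝ) : ℂ)
            * (bv ((d x').toProd.2) : lp (fun _ : V => ℂ) 2) y) := rfl
      rw [hcoord, bv_apply]
      have h2 : (d x').toProd.2 = (x' : V) := rfl
      rw [h2]
      by_cases h : y = (x' : V) <;> simp [h] <;> push_cast <;> ring
    simp only [hterm]
    by_cases h : G.Adj x y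
    · rw [dif_pos h]
      have hmem : y ∈ G.neighborSet x := h
      rw [Finset.sum_eq_single (⟨y, hmem⟩ : ↥(G.neighborSet x))]
      · rw [if_pos rfl]
        have hdw : dartW G w h = w (d ⟨y, hmem⟩) * w (d ⟨y, hmem⟩).symm := rfl
        rw [hdw]
        push_cast
        ring
      · intro b _ hb
        rw [if_neg]
        intro hy
        exact hb (Subtype.ext hy.symm)
      · intro hb; exact absurd (Finset.mem_univ _) hb
    · rw [dif_neg h]
      refine (Finset.sum_eq_zero ?_).symm
      intro b _
      rw [if_neg]
      intro hy
      apply h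
      rw [hy]
      exact b.2
  · -- m = 2k+1, n = 2k+2 = 2*(k+1) even
    subst hk
    rw [ContinuousLinearMap.comp_apply, ContinuousLinearMap.comp_apply, hσbv,
      map_sum, map_sum]
    simp only [map_smul, hJpow2', map_smul, hτbv]
    apply lp.ext
    funext y
    have h2 : 2 * k + 1 + 1 = 2 * (k + 1) := by ring
    rw [h2, hBev (k + 1) (by omega), lp.coeFn_sum, Finset.sum_apply]
    have hterm : ∀ x' : ↥(G.neighborSet x),
        (((w (d x') : ℂ)) • (((w (d x') * w (d x').symm) ^ k * w (d x').symm : ℝ) : ℂ)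
            • bv ((d x').symm.toProd.2) : lp (fun _ : V => ℂ) 2) y
          = if y = x then ((dartW G w x'.2 ^ (k + 1) : ℝ) : ℂ) else 0 := by
      intro x'
      have hcoord : (((w (d x') : ℂ)) • (((w (d x') * w (d x').symm) ^ k * w (d x').symm : ℝ) : ℂ)
            • bv ((d x').symm.toProd.2) : lp (fun _ : V => ℂ) 2) y
          = (w (d x') : ℂ) * (((((w (d x') * w (d x').symm) ^ k * w (d x').symm : ℝ)) : ℂ)
            * (bv ((d x').symm.toProd.2) : lp (fun _ : V => ℂ) 2) y) := rfl
      rw [hcoord, bv_apply]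
      have h3 : (d x').symm.toProd.2 = x := rfl
      rw [h3]
      have hdw : dartW G w x'.2 = w (d x') * w (d x').symm := rfl
      by_cases h : y = x <;> simp [h, hdw] <;> push_cast <;> ring
    simp only [hterm]
    by_cases h : y = x
    · simp only [if_pos h, tsum_fintype]
      push_cast
      rfl
    · simp [h]
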